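/- Let F(x,y) = (−(x − s(y))/2 + (√3/2)y, −(√3/2)(x − s(y)) − y/2) and let V be as defined below. For every (x,y) ∈ ℝ² not lying on the grid 𝔉 (i.e. (x,y) ∈ U = ℝ² ∖ 𝔉), we have V(F(x,y)) = V(x,y); that is, V is a first integral of F on the zero-free set U. -/

import Mathlib

noncomputable def s (y : ℝ) : ℝ := if 0 ≤ y then 1 else -1

/-- The map `F_α` of the paper for `α = 2π/3`. -/
noncomputable def F (q : ℝ × ℝ) : ℝ × ℝ :=
  (-(q.1 - s q.2) / 2 + (Real.sqrt 3 / 2) * q.2,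
   -(Real.sqrt 3 / 2) * (q.1 - s q.2) - q.2 / 2)

noncomputable def B (q : ℝ × ℝ) : ℤ := ⌊(3 * q.1 - Real.sqrt 3 * q.2) / 6⌋
noncomputable def C (q : ℝ × ℝ) : ℤ := ⌊Real.sqrt 3 * q.2 / 3⌋
noncomputable def D (q : ℝ × ℝ) : ℤ := ⌊(3 * q.1 + Real.sqrt 3 * q.2 + 3) / 6⌋

noncomputable def V (q : ℝ × ℝ) : ℤ :=
  max (max (|B q - C q + D q|) (|B q + C q + D q + 1| - 1)) (|-B q + C q + D q|)

/-!
In the coordinates `b = (3x - √3 y)/6`, `c = √3 y/3`, `d = b + c + 1/2`, whose floors are `B`, `C`,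
`D`, the grid `𝔉` is the set where one of `b, c, d` is an integer, and `F` acts as the cyclic
substitution `(b, c, d) ↦ (c, t - d, t - b)` with `t = (1 + s y)/2 ∈ {0, 1}`. Off the grid the
floors therefore transform as `(B, C, D) ↦ (C, t - D - 1, t - B - 1)`, with `t = 1` exactly when
`C ≥ 0`. Since always `B + C ≤ D ≤ B + C + 2`, what remains is an identity between piecewise
linear functions of three integers.
-/

theorem Int.floor_intCast_sub_of_notMem {R : Type*} [Ring R] [LinearOrder R]
    [IsStrictOrderedRing R] [FloorRing R] {a : R} (ha : a ∉ Set.range ((↑) : ℤ → R)) (n : ℤ) :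
    ⌊(n : R) - a⌋ = n - ⌊a⌋ - 1 := by
  rw [sub_eq_add_neg, Int.floor_intCast_add, Int.floor_neg,
    (Int.ceil_eq_floor_add_one_iff_notMem a).2 ha]
  ring

theorem Int.floor_add_floor_le_floor_add_add_half {k : Type*} [Field k] [LinearOrder k]
    [IsStrictOrderedRing k] [FloorRing k] (a b : k) :
    ⌊a⌋ + ⌊b⌋ ≤ ⌊a + b + 1 / 2⌋ ∧ ⌊a + b + 1 / 2⌋ ≤ ⌊a⌋ + ⌊b⌋ + 2 := by
  constructor
  · exact (Int.le_floor_add a b).trans (Int.floor_mono (by norm_num))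
  · calc ⌊a + b + 1 / 2⌋ ≤ ⌊a + b + 1⌋ := Int.floor_mono (by norm_num)
      _ = ⌊a + b⌋ + 1 := Int.floor_add_one _
      _ ≤ ⌊a⌋ + ⌊b⌋ + 2 := by linarith [Int.le_floor_add_floor a b]

def vOfFloors (p q d : ℤ) : ℤ :=
  max (max |p - q + d| (|p + q + d + 1| - 1)) |-p + q + d|

theorem vOfFloors_cycle {p q d : ℤ} (hl : p + q ≤ d) (hr : d ≤ p + q + 2) :
    vOfFloors q ((if 0 ≤ q then 1 else 0) - d - 1) ((if 0 ≤ q then 1 else 0) - p - 1) =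
      vOfFloors p q d := by
  simp only [vOfFloors, Int.abs_eq_natAbs]
  split_ifs <;> omega

noncomputable def bCoord (q : ℝ × ℝ) : ℝ := (3 * q.1 - √3 * q.2) / 6

noncomputable def cCoord (q : ℝ × ℝ) : ℝ := √3 * q.2 / 3

noncomputable def dCoord (q : ℝ × ℝ) : ℝ := bCoord q + cCoord q + 1 / 2

theorem B_eq_floor_bCoord (q : ℝ × ℝ) : B q = ⌊bCoord q⌋ := rfl

theorem C_eq_floor_cCoord (q : ℝ × ℝ) : C q = ⌊cCoord q⌋ := rfl

theorem D_eq_floor_dCoord (q : ℝ × ℝ) : D q = ⌊dCoord q⌋ := by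
  rw [D, dCoord, bCoord, cCoord]
  ring_nf

theorem V_eq_vOfFloors (q : ℝ × ℝ) : V q = vOfFloors (B q) (C q) (D q) := rfl

theorem sqrt_three_mul_self : √3 * √3 = 3 := Real.mul_self_sqrt (by norm_num)

theorem sqrt_three_ne_zero : √3 ≠ 0 := by positivity

theorem bCoord_F (q : ℝ × ℝ) : bCoord (F q) = cCoord q := by
  simp only [bCoord, cCoord, F]
  linear_combination ((q.1 - s q.2) / 12) * sqrt_three_mul_self

theorem cCoord_F (q : ℝ × ℝ) : cCoord (F q) = (1 + s q.2) / 2 - dCoord q := by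
  simp only [dCoord, bCoord, cCoord, F]
  linear_combination (-(q.1 - s q.2) / 6) * sqrt_three_mul_self

theorem dCoord_F (q : ℝ × ℝ) : dCoord (F q) = (1 + s q.2) / 2 - bCoord q := by
  simp only [dCoord, bCoord, cCoord, F]
  linear_combination (-(q.1 - s q.2) / 12) * sqrt_three_mul_self

theorem bCoord_eq_iff (x y k : ℝ) : bCoord (x, y) = k ↔ y = √3 * (x - 2 * k) := by
  simp only [bCoord]
  constructor <;> intro h
  · apply mul_left_cancel₀ sqrt_three_ne_zero
    linear_combination (-6) * h - (x - 2 * k) * sqrt_three_mul_self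
  · linear_combination (-√3 / 6) * h - (x - 2 * k) / 6 * sqrt_three_mul_self

theorem dCoord_eq_iff (x y m : ℝ) : dCoord (x, y) = m + 1 ↔ y = -√3 * (x - 2 * m - 1) := by
  simp only [dCoord, bCoord, cCoord]
  constructor <;> intro h
  · apply mul_left_cancel₀ sqrt_three_ne_zero
    linear_combination 6 * h + (x - 2 * m - 1) * sqrt_three_mul_self
  · linear_combination (√3 / 6) * h - (x - 2 * m - 1) / 6 * sqrt_three_mul_self

theorem B_add_C_le_D (q : ℝ × ℝ) : B q + C q ≤ D q ∧ D q ≤ B q + C q + 2 := by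
  rw [B_eq_floor_bCoord, C_eq_floor_cCoord, D_eq_floor_dCoord]
  exact Int.floor_add_floor_le_floor_add_add_half _ _

theorem C_nonneg_iff (q : ℝ × ℝ) : 0 ≤ C q ↔ 0 ≤ q.2 := by
  rw [C_eq_floor_cCoord, Int.floor_nonneg, cCoord, mul_div_right_comm]
  exact mul_nonneg_iff_of_pos_left (by positivity)

theorem one_add_s_div_two (y : ℝ) :
    (1 + s y) / 2 = ((if 0 ≤ y then 1 else 0 : ℤ) : ℝ) := by
  unfold s
  split_ifs <;> norm_num

theorem B_F (q : ℝ × ℝ) : B (F q) = C q := by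
  rw [B_eq_floor_bCoord, bCoord_F, C_eq_floor_cCoord]

theorem C_F {q : ℝ × ℝ} (hd : dCoord q ∉ Set.range ((↑) : ℤ → ℝ)) :
    C (F q) = (if 0 ≤ C q then 1 else 0) - D q - 1 := by
  rw [C_eq_floor_cCoord, cCoord_F, one_add_s_div_two, Int.floor_intCast_sub_of_notMem hd,
    D_eq_floor_dCoord]
  simp only [C_nonneg_iff]

theorem D_F {q : ℝ × ℝ} (hb : bCoord q ∉ Set.range ((↑) : ℤ → ℝ)) :
    D (F q) = (if 0 ≤ C q then 1 else 0) - B q - 1 := by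
  rw [D_eq_floor_dCoord, dCoord_F, one_add_s_div_two, Int.floor_intCast_sub_of_notMem hb,
    B_eq_floor_bCoord]
  simp only [C_nonneg_iff]

theorem V_F {q : ℝ × ℝ} (hb : bCoord q ∉ Set.range ((↑) : ℤ → ℝ))
    (hd : dCoord q ∉ Set.range ((↑) : ℤ → ℝ)) : V (F q) = V q := by
  rw [V_eq_vOfFloors, V_eq_vOfFloors, B_F, C_F hd, D_F hb]
  exact vOfFloors_cycle (B_add_C_le_D q).1 (B_add_C_le_D q).2

/-- `V` is a first integral of `F` on the zero-free set `U = ℝ² ∖ 𝔉`. -/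
theorem V_first_integral_two_pi_div_three (x y : ℝ)
    (h : ¬((∃ k : ℤ, y = Real.sqrt 3 * (x - 2 * k)) ∨
           (∃ ℓ : ℤ, y = Real.sqrt 3 * ℓ) ∨
           (∃ m : ℤ, y = -Real.sqrt 3 * (x - 2 * m - 1)))) :
    V (F (x, y)) = V (x, y) := by
  refine V_F ?_ ?_
  · rintro ⟨k, hk⟩
    exact h (Or.inl ⟨k, (bCoord_eq_iff x y k).1 hk.symm⟩)
  · rintro ⟨n, hn⟩
    refine h (Or.inr (Or.inr ⟨n - 1, ?_⟩))
    push_cast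
    exact (dCoord_eq_iff x y _).1 (by rw [← hn]; ring)
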